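/- Under the same hypotheses (equations 2nd), for every ζ ∈ ℂ, W(ζ) = (B₀+B₁ζ)(A₀+A₁ζ) satisfies W' = [W_#, W] where W_# = (1/2)(B₀A₁ + B₁A₀) + B₁A₁ζ. -/

import Mathlib

/-!
Put `A = A₀ + ζ A₁` and `B = B₀ + ζ B₁`. Since `A₁ B A₁ - A₁ B A₁ = 0`, replacing `A₀` by `A` in
`A₁ B A₀ - A₀ B A₁` changes nothing, so the system (2nd) says `A' = ½ (A₁ B A - A B A₁)`, and
symmetrically `B' = ½ (B₁ A B - B A B₁)`. Then `W' = B' A + B A' = [M, W]` with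
`M = ½ (B₁ A + B A₁)`, and expanding `M` gives `W_#`.
-/

open Matrix

attribute [local instance] Matrix.normedAddCommGroup Matrix.normedSpace

section

variable {𝕜 : Type*} [NontriviallyNormedField 𝕜] {m n : Type*} [Fintype m] [Fintype n]

theorem HasDerivAt.matrix_mul {R l : Type*} [NormedRing R] [NormedAlgebra 𝕜 R]
    {B : 𝕜 → Matrix l m R} {A : 𝕜 → Matrix m n R}
    {B' : Matrix l m R} {A' : Matrix m n R} {t : 𝕜}
    (hB : HasDerivAt B B' t) (hA : HasDerivAt A A' t) :
    HasDerivAt (fun s => B s * A s) (B' * A t + B t * A') t := by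
  refine hasDerivAt_pi.2 fun i => hasDerivAt_pi.2 fun k => ?_
  have hentry := HasDerivAt.fun_sum (u := Finset.univ) fun j _ =>
    (hasDerivAt_pi.1 (hasDerivAt_pi.1 hB i) j).mul (hasDerivAt_pi.1 (hasDerivAt_pi.1 hA j) k)
  simpa [mul_apply, Finset.sum_add_distrib] using hentry

theorem hasDerivAt_pencil {𝕂 : Type*} [NormedField 𝕂] [NormedAlgebra 𝕜 𝕂]
    {X₀ X₁ : 𝕜 → Matrix m n 𝕂} {Y₀ Y₁ : Matrix n m 𝕂} {t : 𝕜} (ζ : 𝕂)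
    (h₀ : HasDerivAt X₀ ((1 / 2 : 𝕂) • (X₁ t * Y₀ * X₀ t - X₀ t * Y₀ * X₁ t)) t)
    (h₁ : HasDerivAt X₁ ((1 / 2 : 𝕂) • (X₁ t * Y₁ * X₀ t - X₀ t * Y₁ * X₁ t)) t) :
    HasDerivAt (fun s => X₀ s + ζ • X₁ s) ((1 / 2 : 𝕂) •
      (X₁ t * (Y₀ + ζ • Y₁) * (X₀ t + ζ • X₁ t) -
        (X₀ t + ζ • X₁ t) * (Y₀ + ζ • Y₁) * X₁ t)) t := by
  refine (h₀.add (h₁.const_smul ζ)).congr_deriv ?_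
  simp only [Matrix.mul_add, Matrix.add_mul, Matrix.smul_mul, Matrix.mul_smul, smul_sub, smul_add]
  module

end

theorem lax_identity {R m n : Type*} [CommRing R] [Fintype m] [Fintype n] (c : R)
    (A A₁ : Matrix n m R) (B B₁ : Matrix m n R) :
    c • (B₁ * A * B - B * A * B₁) * A + B * (c • (A₁ * B * A - A * B * A₁)) =
      c • (B₁ * A + B * A₁) * (B * A) - B * A * (c • (B₁ * A + B * A₁)) := by
  simp only [Matrix.mul_add, Matrix.add_mul, Matrix.mul_sub, Matrix.sub_mul, Matrix.smul_mul,
    Matrix.mul_smul, Matrix.mul_assoc, smul_add, smul_sub]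
  abel

/-- Solutions of the system (2nd) give, for each spectral parameter `ζ`, a Lax
equation `W' = [W_#, W]` for `W(ζ) = (B₀+B₁ζ)(A₀+A₁ζ)`. -/
theorem system2nd_implies_lax_W (n m : ℕ)
    (A₀ A₁ : ℝ → Matrix (Fin n) (Fin m) ℂ) (B₀ B₁ : ℝ → Matrix (Fin m) (Fin n) ℂ)
    (hA₀ : ∀ t, HasDerivAt A₀ ((1 / 2 : ℂ) •
      (A₁ t * B₀ t * A₀ t - A₀ t * B₀ t * A₁ t)) t)
    (hA₁ : ∀ t, HasDerivAt A₁ ((1 / 2 : ℂ) •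
      (A₁ t * B₁ t * A₀ t - A₀ t * B₁ t * A₁ t)) t)
    (hB₀ : ∀ t, HasDerivAt B₀ ((1 / 2 : ℂ) •
      (B₁ t * A₀ t * B₀ t - B₀ t * A₀ t * B₁ t)) t)
    (hB₁ : ∀ t, HasDerivAt B₁ ((1 / 2 : ℂ) •
      (B₁ t * A₁ t * B₀ t - B₀ t * A₁ t * B₁ t)) t) :
    ∀ (ζ : ℂ) (t : ℝ), HasDerivAt
      (fun s => (B₀ s + ζ • B₁ s) * (A₀ s + ζ • A₁ s))
      (((1 / 2 : ℂ) • (B₀ t * A₁ t + B₁ t * A₀ t) + ζ • (B₁ t * A₁ t)) *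
          ((B₀ t + ζ • B₁ t) * (A₀ t + ζ • A₁ t))
        - ((B₀ t + ζ • B₁ t) * (A₀ t + ζ • A₁ t)) *
          ((1 / 2 : ℂ) • (B₀ t * A₁ t + B₁ t * A₀ t) + ζ • (B₁ t * A₁ t))) t := by
  intro ζ t
  have hA := hasDerivAt_pencil ζ (hA₀ t) (hA₁ t)
  have hB := hasDerivAt_pencil ζ (hB₀ t) (hB₁ t)
  have hsharp : (1 / 2 : ℂ) • (B₁ t * (A₀ t + ζ • A₁ t) + (B₀ t + ζ • B₁ t) * A₁ t) =
      (1 / 2 : ℂ) • (B₀ t * A₁ t + B₁ t * A₀ t) + ζ • (B₁ t * A₁ t) := by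
    simp only [Matrix.mul_add, Matrix.add_mul, Matrix.mul_smul, Matrix.smul_mul]
    module
  refine (hB.matrix_mul hA).congr_deriv ?_
  rw [lax_identity, hsharp]
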